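/- arXiv:1903.10668 — 3 statements merged into one kernel-verified Lean document; each statement's English description precedes it below -/
import Mathlib

section
/- Let p, q, r, s be distinct odd primes with s ≡ −2 (mod p·q·r). Let c be a positive integer with r^c ≡ −2 (mod s) and r^c ≡ 1 (mod p·q). Then for all positive integers a, b, d with (q−1)(r−1)(s−1) dividing a, (p−1)(r−1)(s−1) dividing b, and d ≡ 1 (mod (p−1)(q−1)(r−1)), the product pqrs divides p^a + q^b + r^c + s^d. -/
private lemma pow_eq_one_of_dvd' {t : ℕ} [Fact t.Prime] {x : ZMod t} (hx : x ≠ 0)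
    {n : ℕ} (h : (t - 1) ∣ n) : x ^ n = 1 := by
  obtain ⟨k, rfl⟩ := h
  rw [pow_mul, ZMod.pow_card_sub_one_eq_one hx, one_pow]

private lemma pow_eq_self' {t : ℕ} [Fact t.Prime] {x : ZMod t} (hx : x ≠ 0)
    {n : ℕ} (hn : 0 < n) (h : (t - 1) ∣ n - 1) : x ^ n = x := by
  conv_lhs => rw [show n = 1 + (n - 1) by omega]
  rw [pow_add, pow_one, pow_eq_one_of_dvd' hx h, mul_one]

private lemma neg_two_ne_zero' {t : ℕ} [Fact t.Prime] (ht : Odd t) : (-2 : ZMod t) ≠ 0 := by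
  intro h
  have h2 : ((2 : ℕ) : ZMod t) = 0 := by push_cast; linear_combination -h
  rw [ZMod.natCast_eq_zero_iff] at h2
  have h3 := Nat.le_of_dvd (by norm_num) h2
  have h4 := (Fact.out : t.Prime).two_le
  rw [Nat.odd_iff] at ht
  omega

private lemma prime_cast_ne_zero {t u : ℕ} [Fact t.Prime] (hu : u.Prime) (h : t ≠ u) :
    (u : ZMod t) ≠ 0 := by
  rw [Ne, ZMod.natCast_eq_zero_iff]
  intro hdvd
  exact h ((Nat.prime_dvd_prime_iff_eq (Fact.out : t.Prime) hu).mp hdvd)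

/-- Let `p, q, r, s` be distinct odd primes with `s ≡ -2 (mod p*q*r)`, and let `c` be a
positive integer with `r^c ≡ -2 (mod s)` and `r^c ≡ 1 (mod p*q)`. Then for all positive
`a, b, d` with `(q-1)(r-1)(s-1) ∣ a`, `(p-1)(r-1)(s-1) ∣ b` and
`d ≡ 1 (mod (p-1)(q-1)(r-1))`, we have `p*q*r*s ∣ p^a + q^b + r^c + s^d`. -/
theorem final_divisibility (p q r s : ℕ)
    (hp : p.Prime) (hq : q.Prime) (hr : r.Prime) (hs : s.Prime)
    (hpodd : Odd p) (hqodd : Odd q) (hrodd : Odd r) (hsodd : Odd s)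
    (hpq : p ≠ q) (hpr : p ≠ r) (hps : p ≠ s) (hqr : q ≠ r) (hqs : q ≠ s) (hrs : r ≠ s)
    (hscong : (s : ℤ) ≡ -2 [ZMOD ((p : ℤ) * q * r)])
    (c : ℕ) (hc : 0 < c) (hrc1 : (r : ℤ) ^ c ≡ -2 [ZMOD (s : ℤ)])
    (hrc2 : r ^ c ≡ 1 [MOD p * q])
    (a b d : ℕ) (ha : 0 < a) (hb : 0 < b) (hd : 0 < d)
    (hdiva : (q - 1) * (r - 1) * (s - 1) ∣ a) (hdivb : (p - 1) * (r - 1) * (s - 1) ∣ b)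
    (hdcong : d ≡ 1 [MOD (p - 1) * (q - 1) * (r - 1)]) :
    p * q * r * s ∣ p ^ a + q ^ b + r ^ c + s ^ d := by
  haveI := Fact.mk hp; haveI := Fact.mk hq; haveI := Fact.mk hr; haveI := Fact.mk hs
  have hdm : ∀ t : ℕ, (t - 1) ∣ (p - 1) * (q - 1) * (r - 1) → (t - 1) ∣ d - 1 := by
    intro t hdvd
    have h1 : (p - 1) * (q - 1) * (r - 1) ∣ d - 1 :=
      (Nat.modEq_iff_dvd' hd).mp hdcong.symm
    exact hdvd.trans h1
  -- divisibility by p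
  have hP : p ∣ p ^ a + q ^ b + r ^ c + s ^ d := by
    rw [← ZMod.natCast_eq_zero_iff]
    push_cast
    have h1 : (p : ZMod p) = 0 := ZMod.natCast_self p
    have h2 : (q : ZMod p) ^ b = 1 := pow_eq_one_of_dvd' (prime_cast_ne_zero hq hpq)
      (Dvd.dvd.trans ⟨(r-1)*(s-1), by ring⟩ hdivb)
    have h3 : (r : ZMod p) ^ c = 1 := by
      have := (Nat.ModEq.of_dvd (dvd_mul_right p q) hrc2)
      have := (ZMod.natCast_eq_natCast_iff _ _ _).mpr this
      push_cast at this; exact this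
    have h4 : (s : ZMod p) = -2 := by
      have := Int.ModEq.of_dvd (show (p:ℤ) ∣ (p:ℤ)*q*r from ⟨(q:ℤ)*r, by ring⟩) hscong
      have := (ZMod.intCast_eq_intCast_iff _ _ _).mpr this
      push_cast at this; exact this
    have h5 : (s : ZMod p) ^ d = -2 := by
      rw [h4]; exact pow_eq_self' (neg_two_ne_zero' hpodd) hd
        (hdm p ⟨(q-1)*(r-1), by ring⟩)
    rw [h2, h3, h5, h1, zero_pow ha.ne']; ring
  -- divisibility by q
  have hQ : q ∣ p ^ a + q ^ b + r ^ c + s ^ d := by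
    rw [← ZMod.natCast_eq_zero_iff]
    push_cast
    have h1 : (p : ZMod q) ^ a = 1 := pow_eq_one_of_dvd' (prime_cast_ne_zero hp hpq.symm)
      (Dvd.dvd.trans ⟨(r-1)*(s-1), by ring⟩ hdiva)
    have h3 : (r : ZMod q) ^ c = 1 := by
      have := (Nat.ModEq.of_dvd (dvd_mul_left q p) hrc2)
      have := (ZMod.natCast_eq_natCast_iff _ _ _).mpr this
      push_cast at this; exact this
    have h4 : (s : ZMod q) = -2 := by
      have := Int.ModEq.of_dvd (show (q:ℤ) ∣ (p:ℤ)*q*r from ⟨(p:ℤ)*r, by ring⟩) hscong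
      have := (ZMod.intCast_eq_intCast_iff _ _ _).mpr this
      push_cast at this; exact this
    have h5 : (s : ZMod q) ^ d = -2 := by
      rw [h4]; exact pow_eq_self' (neg_two_ne_zero' hqodd) hd
        (hdm q ⟨(p-1)*(r-1), by ring⟩)
    rw [h1, h3, h5, ZMod.natCast_self q, zero_pow hb.ne']; ring
  -- divisibility by r
  have hR : r ∣ p ^ a + q ^ b + r ^ c + s ^ d := by
    rw [← ZMod.natCast_eq_zero_iff]
    push_cast
    have h1 : (p : ZMod r) ^ a = 1 := pow_eq_one_of_dvd' (prime_cast_ne_zero hp hpr.symm)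
      (Dvd.dvd.trans ⟨(q-1)*(s-1), by ring⟩ hdiva)
    have h2 : (q : ZMod r) ^ b = 1 := pow_eq_one_of_dvd' (prime_cast_ne_zero hq hqr.symm)
      (Dvd.dvd.trans ⟨(p-1)*(s-1), by ring⟩ hdivb)
    have h4 : (s : ZMod r) = -2 := by
      have := Int.ModEq.of_dvd (show (r:ℤ) ∣ (p:ℤ)*q*r from ⟨(p:ℤ)*q, by ring⟩) hscong
      have := (ZMod.intCast_eq_intCast_iff _ _ _).mpr this
      push_cast at this; exact this
    have h5 : (s : ZMod r) ^ d = -2 := by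
      rw [h4]; exact pow_eq_self' (neg_two_ne_zero' hrodd) hd
        (hdm r ⟨(p-1)*(q-1), by ring⟩)
    rw [h1, h2, h5, ZMod.natCast_self r, zero_pow hc.ne']; ring
  -- divisibility by s
  have hS : s ∣ p ^ a + q ^ b + r ^ c + s ^ d := by
    rw [← ZMod.natCast_eq_zero_iff]
    push_cast
    have h1 : (p : ZMod s) ^ a = 1 := pow_eq_one_of_dvd' (prime_cast_ne_zero hp hps.symm)
      (Dvd.dvd.trans ⟨(q-1)*(r-1), by ring⟩ hdiva)
    have h2 : (q : ZMod s) ^ b = 1 := pow_eq_one_of_dvd' (prime_cast_ne_zero hq hqs.symm)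
      (Dvd.dvd.trans ⟨(p-1)*(r-1), by ring⟩ hdivb)
    have h3 : (r : ZMod s) ^ c = -2 := by
      have := (ZMod.intCast_eq_intCast_iff _ _ _).mpr hrc1
      push_cast at this; exact this
    rw [h1, h2, h3, ZMod.natCast_self s, zero_pow hd.ne']; ring
  -- combine
  have cpq : Nat.Coprime p q := (Nat.coprime_primes hp hq).mpr hpq
  have cpr : Nat.Coprime p r := (Nat.coprime_primes hp hr).mpr hpr
  have cps : Nat.Coprime p s := (Nat.coprime_primes hp hs).mpr hps
  have cqr : Nat.Coprime q r := (Nat.coprime_primes hq hr).mpr hqr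
  have cqs : Nat.Coprime q s := (Nat.coprime_primes hq hs).mpr hqs
  have crs : Nat.Coprime r s := (Nat.coprime_primes hr hs).mpr hrs
  have h12 : p * q ∣ p ^ a + q ^ b + r ^ c + s ^ d := cpq.mul_dvd_of_dvd_of_dvd hP hQ
  have h123 : p * q * r ∣ p ^ a + q ^ b + r ^ c + s ^ d :=
    (Nat.Coprime.mul cpr cqr).mul_dvd_of_dvd_of_dvd h12 hR
  exact (Nat.Coprime.mul (Nat.Coprime.mul cps cqs) crs).mul_dvd_of_dvd_of_dvd h123 hS
end

section
/- For every prime p, there exist infinitely many weakly prime-additive numbers n with p dividing n and κ_n = 3. -/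
/-- `n` admits a representation as a sum of `t` powers of distinct prime divisors of `n`,
with positive exponents. -/
def HasPrimePowerRep (n t : ℕ) : Prop :=
  ∃ (p : Fin t → ℕ) (a : Fin t → ℕ),
    Function.Injective p ∧ (∀ i, (p i).Prime) ∧ (∀ i, p i ∣ n) ∧
    (∀ i, 0 < a i) ∧ n = ∑ i, p i ^ a i

/-- `n` is weakly prime-additive: it has at least two distinct prime divisors and is a
sum of positive powers of some of its distinct prime divisors. -/
def WeaklyPrimeAdditive (n : ℕ) : Prop :=
  2 ≤ n.primeFactors.card ∧ ∃ t, HasPrimePowerRep n t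

/-- The length `κ_n` of a weakly prime-additive number: the minimal number of terms in such
a representation. -/
noncomputable def wpaLength (n : ℕ) : ℕ := sInf {t | HasPrimePowerRep n t}

/-- Assumption (∗): existence of a prime in a prescribed arithmetic progression with a
prescribed primitive root. -/
def StarAssumption : Prop :=
  ∀ a f g : ℕ, 0 < a → a ≤ f → Nat.Coprime a f → 4 ∣ f →
    g.Prime → Odd g → g ∣ f → jacobiSym (g : ℤ) a = -1 →
    ∃ p : ℕ, p.Prime ∧ p ≡ a [MOD f] ∧ IsPrimitiveRoot (g : ZMod p) (p - 1)

section Aux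

/-- Build a 3-term prime power representation. -/
lemma rep3 {n u v w x y z : ℕ} (hu : u.Prime) (hv : v.Prime) (hw : w.Prime)
    (huv : u ≠ v) (huw : u ≠ w) (hvw : v ≠ w)
    (hun : u ∣ n) (hvn : v ∣ n) (hwn : w ∣ n)
    (hx : 0 < x) (hy : 0 < y) (hz : 0 < z)
    (hn : n = u ^ x + v ^ y + w ^ z) :
    HasPrimePowerRep n 3 := by
  refine ⟨![u, v, w], ![x, y, z], ?_, ?_, ?_, ?_, ?_⟩
  · intro i j hij
    fin_cases i <;> fin_cases j <;> simp_all
  · intro i; fin_cases i <;> simpa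
  · intro i; fin_cases i <;> simpa
  · intro i; fin_cases i <;> simpa
  · simpa [Fin.sum_univ_three] using hn

/-- Any `n` with a 3-term representation is weakly prime-additive of length 3. -/
lemma wpa_parts {n : ℕ} (h3 : HasPrimePowerRep n 3) :
    WeaklyPrimeAdditive n ∧ wpaLength n = 3 := by
  obtain ⟨q, a, hinj, hq, hdvd, ha, hsum⟩ := id h3
  have h01 : q 0 ≠ q 1 := by
    intro h
    have := hinj h
    simp at this
  have hpos : ∀ i, 0 < q i ^ a i := fun i => pow_pos (hq i).pos _
  have hn0 : n ≠ 0 := by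
    have h0 := hpos 0
    have h1 := hpos 1
    have h2 := hpos 2
    rw [hsum, Fin.sum_univ_three]
    omega
  have hcard : 2 ≤ n.primeFactors.card := by
    have hsub : ({q 0, q 1} : Finset ℕ) ⊆ n.primeFactors := by
      intro t ht
      rcases Finset.mem_insert.mp ht with h | h
      · subst h; exact Nat.mem_primeFactors.mpr ⟨hq 0, hdvd 0, hn0⟩
      · have := Finset.mem_singleton.mp h
        subst this; exact Nat.mem_primeFactors.mpr ⟨hq 1, hdvd 1, hn0⟩
    calc 2 = ({q 0, q 1} : Finset ℕ).card := (Finset.card_pair h01).symm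
      _ ≤ n.primeFactors.card := Finset.card_le_card hsub
  have not0 : ¬ HasPrimePowerRep n 0 := by
    rintro ⟨r, b, -, -, -, -, hs⟩
    simp at hs
    exact hn0 hs
  have not1 : ¬ HasPrimePowerRep n 1 := by
    rintro ⟨r, b, -, hr, hrd, hb, hs⟩
    rw [Fin.sum_univ_one] at hs
    have e0 : q 0 = r 0 := (Nat.prime_dvd_prime_iff_eq (hq 0) (hr 0)).mp
      ((hq 0).dvd_of_dvd_pow (hs ▸ hdvd 0))
    have e1 : q 1 = r 0 := (Nat.prime_dvd_prime_iff_eq (hq 1) (hr 0)).mp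
      ((hq 1).dvd_of_dvd_pow (hs ▸ hdvd 1))
    exact h01 (e0.trans e1.symm)
  have not2 : ¬ HasPrimePowerRep n 2 := by
    rintro ⟨r, b, hrinj, hr, hrd, hb, hs⟩
    have hr01 : r 0 ≠ r 1 := by
      intro h
      have := hrinj h
      simp at this
    have hd0 : r 0 ∣ r 0 ^ b 0 := dvd_pow_self _ (hb 0).ne'
    have hdd : r 0 ∣ r 1 ^ b 1 := by
      have hd := hrd 0
      rw [hs, Fin.sum_univ_two] at hd
      exact (Nat.dvd_add_right hd0).mp hd
    exact hr01 ((Nat.prime_dvd_prime_iff_eq (hr 0) (hr 1)).mp ((hr 0).dvd_of_dvd_pow hdd))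
  have hne : {t | HasPrimePowerRep n t}.Nonempty := ⟨3, h3⟩
  have hmem : HasPrimePowerRep n (sInf {t | HasPrimePowerRep n t}) := Nat.sInf_mem hne
  have hle : sInf {t | HasPrimePowerRep n t} ≤ 3 := Nat.sInf_le h3
  have heq : wpaLength n = 3 := by
    show sInf {t | HasPrimePowerRep n t} = 3
    have h0' : sInf {t | HasPrimePowerRep n t} ≠ 0 := fun h => not0 (h ▸ hmem)
    have h1' : sInf {t | HasPrimePowerRep n t} ≠ 1 := fun h => not1 (h ▸ hmem)
    have h2' : sInf {t | HasPrimePowerRep n t} ≠ 2 := fun h => not2 (h ▸ hmem)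
    omega
  exact ⟨⟨hcard, 3, h3⟩, heq⟩

lemma mem_of_rep {P n u v w x y z : ℕ} (hu : u.Prime) (hv : v.Prime) (hw : w.Prime)
    (huv : u ≠ v) (huw : u ≠ w) (hvw : v ≠ w)
    (hun : u ∣ n) (hvn : v ∣ n) (hwn : w ∣ n)
    (hx : 0 < x) (hy : 0 < y) (hz : 0 < z)
    (hn : n = u ^ x + v ^ y + w ^ z) (hP : P ∣ n) :
    WeaklyPrimeAdditive n ∧ P ∣ n ∧ wpaLength n = 3 := by
  obtain ⟨hw1, hw2⟩ := wpa_parts (rep3 hu hv hw huv huw hvw hun hvn hwn hx hy hz hn)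
  exact ⟨hw1, hP, hw2⟩

end Aux

/-- For every prime `p`, there are infinitely many weakly prime-additive numbers `n` with
`p ∣ n` and `κ_n = 3`. -/
theorem infinitely_many_wpa_length_three_of_prime (p : ℕ) (hp : p.Prime) :
    {n : ℕ | WeaklyPrimeAdditive n ∧ p ∣ n ∧ wpaLength n = 3}.Infinite := by
  by_cases hp2 : p = 2
  · subst hp2
    refine Set.infinite_of_injective_forall_mem
      (f := fun j : ℕ => 2 ^ (4 * j + 1) + 3 ^ 1 + 5 ^ 2) ?_ ?_
    · intro i j hij
      simp only at hij
      have h2 : 2 ^ (4 * i + 1) = 2 ^ (4 * j + 1) :=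
        Nat.add_right_cancel (Nat.add_right_cancel hij)
      have := Nat.pow_right_injective (le_refl 2) h2
      omega
    · intro j
      have hd2 : 2 ∣ 2 ^ (4 * j + 1) + 3 ^ 1 + 5 ^ 2 := by
        have h1 : 2 ∣ 2 ^ (4 * j + 1) := dvd_pow_self 2 (by omega)
        omega
      have hd3 : 3 ∣ 2 ^ (4 * j + 1) + 3 ^ 1 + 5 ^ 2 := by
        have : ((2 ^ (4 * j + 1) + 3 ^ 1 + 5 ^ 2 : ℕ) : ZMod 3) = 0 := by
          push_cast
          rw [pow_add, pow_mul, show ((2 : ZMod 3) ^ 4) = 1 by decide, one_pow]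
          decide
        exact (ZMod.natCast_eq_zero_iff _ _).mp this
      have hd5 : 5 ∣ 2 ^ (4 * j + 1) + 3 ^ 1 + 5 ^ 2 := by
        have : ((2 ^ (4 * j + 1) + 3 ^ 1 + 5 ^ 2 : ℕ) : ZMod 5) = 0 := by
          push_cast
          rw [pow_add, pow_mul, show ((2 : ZMod 5) ^ 4) = 1 by decide, one_pow]
          decide
        exact (ZMod.natCast_eq_zero_iff _ _).mp this
      show WeaklyPrimeAdditive _ ∧ 2 ∣ _ ∧ wpaLength _ = 3
      exact mem_of_rep Nat.prime_two Nat.prime_three (by norm_num) (by norm_num)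
        (by norm_num) (by norm_num) hd2 hd3 hd5 (by omega) one_pos (by norm_num) rfl hd2
  · -- odd prime case
    haveI : Fact p.Prime := ⟨hp⟩
    have hp3 : 3 ≤ p := by
      have := hp.two_le
      omega
    have hpodd : p % 2 = 1 := Nat.odd_iff.mp (hp.odd_of_ne_two hp2)
    obtain ⟨g, hg⟩ := IsCyclic.exists_generator (α := (ZMod p)ˣ)
    set gn : ℕ := ((g : ZMod p)).val with hgn_def
    have hval : ((gn : ℕ) : ZMod p) = (g : ZMod p) := ZMod.natCast_rightInverse _
    have hgn_ndvd : ¬ p ∣ gn := by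
      intro hdvd
      have h0 : ((gn : ℕ) : ZMod p) = 0 := (ZMod.natCast_eq_zero_iff _ _).mpr hdvd
      rw [hval] at h0
      exact Units.ne_zero g h0
    have co2p : Nat.Coprime 2 p := (Nat.coprime_primes Nat.prime_two hp).mpr
      (fun h => hp2 h.symm)
    have co8p : Nat.Coprime 8 p := by
      have h := Nat.Coprime.pow_left 3 co2p
      norm_num at h
      exact h
    obtain ⟨r, hr8, hrp⟩ := Nat.chineseRemainder co8p 3 gn
    haveI : NeZero (8 * p) := ⟨by positivity⟩
    have hrunit : IsUnit ((r : ℕ) : ZMod (8 * p)) := by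
      rw [ZMod.isUnit_iff_coprime]
      refine Nat.Coprime.mul_right ?_ ?_
      · have h8 : (r : ℕ) % 8 = 3 := by
          have h := hr8
          unfold Nat.ModEq at h
          omega
        show Nat.gcd (r : ℕ) 8 = 1
        rw [Nat.gcd_comm, Nat.gcd_rec, h8]
        rfl
      · have hnd : ¬ p ∣ (r : ℕ) := by
          intro h
          apply hgn_ndvd
          have h0 : (r : ℕ) ≡ 0 [MOD p] := (Nat.modEq_zero_iff_dvd).mpr h
          exact (Nat.modEq_zero_iff_dvd).mp (hrp.symm.trans h0)
        exact ((Nat.Prime.coprime_iff_not_dvd hp).mpr hnd).symm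
    obtain ⟨q, hq_gt, hq_prime, hq_cast⟩ :=
      Nat.forall_exists_prime_gt_and_eq_mod hrunit (8 * p)
    haveI : Fact q.Prime := ⟨hq_prime⟩
    have hq_mod : q ≡ (r : ℕ) [MOD 8 * p] := (ZMod.natCast_eq_natCast_iff _ _ _).mp hq_cast
    have hq8 : q % 8 = 3 := by
      have h1 : q ≡ (r : ℕ) [MOD 8] := hq_mod.of_dvd ⟨p, rfl⟩
      have h2 : q ≡ 3 [MOD 8] := h1.trans hr8
      unfold Nat.ModEq at h2
      omega
    have hqp_modeq : q ≡ gn [MOD p] := (hq_mod.of_dvd ⟨8, mul_comm 8 p⟩).trans hrp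
    have hq_castp : ((q : ℕ) : ZMod p) = (g : ZMod p) := by
      have h := (ZMod.natCast_eq_natCast_iff _ _ _).mpr hqp_modeq
      rw [hval] at h
      exact h
    have hq_big : 8 * p < q := hq_gt
    have hq2 : q ≠ 2 := by omega
    have hqp : q ≠ p := by omega
    have hq_odd : q % 2 = 1 := by omega
    have hApos : 0 < q / 2 := by omega
    -- (F1): 2 ^ (q/2) = -1 in ZMod q
    have h2ne : (2 : ZMod q) ≠ 0 := by
      have hnd : ¬ q ∣ 2 := by
        intro h
        have := Nat.le_of_dvd (by norm_num) h
        omega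
      have : ((2 : ℕ) : ZMod q) ≠ 0 := by
        rw [Ne, ZMod.natCast_eq_zero_iff]
        exact hnd
      simpa using this
    have hF1 : (2 : ZMod q) ^ (q / 2) = -1 := by
      rcases ZMod.pow_div_two_eq_neg_one_or_one q h2ne with h | h
      · exfalso
        have hsq : IsSquare (2 : ZMod q) := (ZMod.euler_criterion q h2ne).mpr h
        have := (ZMod.exists_sq_eq_two_iff hq2).mp hsq
        omega
      · exact h
    -- (F2): choose b with g ^ b = -(2 ^ (q/2)) in ZMod p
    have h2pne : (2 : ZMod p) ≠ 0 := by
      have hnd : ¬ p ∣ 2 := by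
        intro h
        have := Nat.le_of_dvd (by norm_num) h
        omega
      have : ((2 : ℕ) : ZMod p) ≠ 0 := by
        rw [Ne, ZMod.natCast_eq_zero_iff]
        exact hnd
      simpa using this
    have hunit : IsUnit (-(2 : ZMod p) ^ (q / 2)) :=
      ((isUnit_iff_ne_zero.mpr h2pne).pow _).neg
    obtain ⟨b0, hb0⟩ := Submonoid.mem_powers_iff _ _ |>.mp
      (mem_powers_iff_mem_zpowers.mpr (hg hunit.unit))
    have hbpos : 0 < b0 + (p - 1) := by omega
    have hgb : (g : ZMod p) ^ (b0 + (p - 1)) = -(2 : ZMod p) ^ (q / 2) := by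
      have h1 : g ^ (b0 + (p - 1)) = hunit.unit := by
        rw [pow_add, ZMod.units_pow_card_sub_one_eq_one, mul_one, hb0]
      calc (g : ZMod p) ^ (b0 + (p - 1)) = ((g ^ (b0 + (p - 1)) : (ZMod p)ˣ) : ZMod p) := by
            rw [Units.val_pow_eq_pow_val]
        _ = (hunit.unit : ZMod p) := by rw [h1]
        _ = -(2 : ZMod p) ^ (q / 2) := hunit.unit_spec
    -- (F3): p ∣ 2^(q/2) + q^b
    have hF3 : p ∣ 2 ^ (q / 2) + q ^ (b0 + (p - 1)) := by
      have h0 : ((2 ^ (q / 2) + q ^ (b0 + (p - 1)) : ℕ) : ZMod p) = 0 := by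
        push_cast
        rw [hq_castp, hgb]
        ring
      exact (ZMod.natCast_eq_zero_iff _ _).mp h0
    -- (F4): q ∣ 2^(q/2) + p^((q-1)*(j+1))
    have hpq_ne : (p : ZMod q) ≠ 0 := by
      have hnd : ¬ q ∣ p := by
        intro h
        have := Nat.le_of_dvd (by omega) h
        omega
      rw [Ne, ZMod.natCast_eq_zero_iff]
      exact hnd
    have hF4 : ∀ j : ℕ, q ∣ 2 ^ (q / 2) + p ^ ((q - 1) * (j + 1)) := by
      intro j
      have h0 : ((2 ^ (q / 2) + p ^ ((q - 1) * (j + 1)) : ℕ) : ZMod q) = 0 := by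
        push_cast
        rw [pow_mul, ZMod.pow_card_sub_one_eq_one hpq_ne, one_pow, hF1]
        ring
      exact (ZMod.natCast_eq_zero_iff _ _).mp h0
    -- assemble
    refine Set.infinite_of_injective_forall_mem
      (f := fun j : ℕ => 2 ^ (q / 2) + q ^ (b0 + (p - 1)) + p ^ ((q - 1) * (j + 1))) ?_ ?_
    · intro i j hij
      simp only at hij
      have hpow : p ^ ((q - 1) * (i + 1)) = p ^ ((q - 1) * (j + 1)) :=
        Nat.add_left_cancel hij
      have hexp : (q - 1) * (i + 1) = (q - 1) * (j + 1) :=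
        Nat.pow_right_injective hp.two_le hpow
      have := Nat.eq_of_mul_eq_mul_left (show 0 < q - 1 by omega) hexp
      omega
    · intro j
      have hcpos : 0 < (q - 1) * (j + 1) := Nat.mul_pos (by omega) (by omega)
      have hdvd_pn : p ∣ 2 ^ (q / 2) + q ^ (b0 + (p - 1)) + p ^ ((q - 1) * (j + 1)) :=
        hF3.add (dvd_pow_self p hcpos.ne')
      have hdvd_qn : q ∣ 2 ^ (q / 2) + q ^ (b0 + (p - 1)) + p ^ ((q - 1) * (j + 1)) := by
        have heq : 2 ^ (q / 2) + q ^ (b0 + (p - 1)) + p ^ ((q - 1) * (j + 1))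
            = (2 ^ (q / 2) + p ^ ((q - 1) * (j + 1))) + q ^ (b0 + (p - 1)) := by ring
        rw [heq]
        exact (hF4 j).add (dvd_pow_self q hbpos.ne')
      have hdvd_2n : 2 ∣ 2 ^ (q / 2) + q ^ (b0 + (p - 1)) + p ^ ((q - 1) * (j + 1)) := by
        have h1 : 2 ∣ 2 ^ (q / 2) := dvd_pow_self 2 hApos.ne'
        have h2 : q ^ (b0 + (p - 1)) % 2 = 1 :=
          Nat.odd_iff.mp (Odd.pow (Nat.odd_iff.mpr hq_odd))
        have h3 : p ^ ((q - 1) * (j + 1)) % 2 = 1 :=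
          Nat.odd_iff.mp (Odd.pow (Nat.odd_iff.mpr hpodd))
        omega
      show WeaklyPrimeAdditive _ ∧ p ∣ _ ∧ wpaLength _ = 3
      exact mem_of_rep Nat.prime_two hq_prime hp (by omega) (by omega) hqp
        hdvd_2n hdvd_qn hdvd_pn hApos hbpos hcpos rfl hdvd_pn
end

section
/- Let m = 2^k · m_1 with k ≥ 3 and m_1 odd, and let p be an odd prime with gcd(p, m) = 1. Then there exist primes q and r with q ≡ 1 (mod 2^k p), q ≡ −1 (mod m_1), r ≡ 3 (mod 2^k), and r ≡ 1 (mod p·q·m_1); in particular p, q, r are pairwise distinct odd primes. -/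
lemma isUnit_prod {M N : Type*} [Monoid M] [Monoid N] {u : M} {v : N}
    (hu : IsUnit u) (hv : IsUnit v) : IsUnit ((u, v) : M × N) := by
  obtain ⟨U, rfl⟩ := hu
  obtain ⟨V, rfl⟩ := hv
  exact ⟨⟨((U : M), (V : N)), ((↑U⁻¹ : M), (↑V⁻¹ : N)), by simp [Prod.ext_iff],
    by simp [Prod.ext_iff]⟩, rfl⟩

lemma dirichlet_crt (a b : ℕ) (ha : 0 < a) (hb : 0 < b) (h : Nat.Coprime a b)
    (u : ZMod a) (v : ZMod b) (hu : IsUnit u) (hv : IsUnit v) (n : ℕ) :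
    ∃ q > n, q.Prime ∧ (q : ZMod a) = u ∧ (q : ZMod b) = v := by
  haveI : NeZero (a * b) := ⟨by positivity⟩
  set e := ZMod.chineseRemainder h with he
  have hunit : IsUnit (e.symm (u, v)) := (isUnit_prod hu hv).map e.symm
  obtain ⟨q, hqn, hq, hqe⟩ := Nat.forall_exists_prime_gt_and_eq_mod hunit n
  refine ⟨q, hqn, hq, ?_, ?_⟩
  · have := congrArg e hqe
    rw [RingEquiv.apply_symm_apply, map_natCast] at this
    exact congrArg Prod.fst this
  · have := congrArg e hqe
    rw [RingEquiv.apply_symm_apply, map_natCast] at this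
    exact congrArg Prod.snd this

/-- With `m = 2^k * m₁` (`k ≥ 3`, `m₁` odd) and `p` an odd prime coprime to `m`, there
exist primes `q` and `r` with `q ≡ 1 (mod 2^k p)`, `q ≡ -1 (mod m₁)`, `r ≡ 3 (mod 2^k)`
and `r ≡ 1 (mod p*q*m₁)`; in particular `p, q, r` are pairwise distinct odd primes. -/
theorem exists_q_r (m k m₁ : ℕ) (hk : 3 ≤ k) (hm₁ : Odd m₁) (hm : m = 2 ^ k * m₁)
    (p : ℕ) (hp : p.Prime) (hpodd : Odd p) (hpm : Nat.Coprime p m) :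
    ∃ q r : ℕ, q.Prime ∧ r.Prime ∧
      q ≡ 1 [MOD 2 ^ k * p] ∧ (q : ℤ) ≡ -1 [ZMOD (m₁ : ℤ)] ∧
      r ≡ 3 [MOD 2 ^ k] ∧ r ≡ 1 [MOD p * q * m₁] ∧
      Odd q ∧ Odd r ∧ p ≠ q ∧ p ≠ r ∧ q ≠ r := by
  have hm₁pos : 0 < m₁ := hm₁.pos
  have hppos : 0 < p := hp.pos
  have hpm₁ : Nat.Coprime p m₁ := Nat.Coprime.coprime_dvd_right ⟨2 ^ k, by rw [hm]; ring⟩ hpm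
  have h2m₁ : Nat.Coprime 2 m₁ := (Nat.coprime_two_left).mpr hm₁
  have hcop1 : Nat.Coprime (2 ^ k * p) m₁ :=
    Nat.Coprime.mul (Nat.Coprime.pow_left _ h2m₁) hpm₁
  -- get q
  obtain ⟨q, hqgt, hq, hq1, hq2⟩ := dirichlet_crt (2 ^ k * p) m₁ (by positivity) hm₁pos hcop1
    1 (-1) isUnit_one (IsUnit.neg isUnit_one) 1
  have hqmod : q ≡ 1 [MOD 2 ^ k * p] := by
    rwa [show (1 : ZMod (2 ^ k * p)) = ((1 : ℕ) : ZMod (2 ^ k * p)) by simp,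
      ZMod.natCast_eq_natCast_iff] at hq1
  have hqzmod : (q : ℤ) ≡ -1 [ZMOD (m₁ : ℤ)] := by
    have : ((q : ℤ) : ZMod m₁) = ((-1 : ℤ) : ZMod m₁) := by push_cast; exact hq2
    exact (ZMod.intCast_eq_intCast_iff _ _ _).mp this
  have hqodd : Odd q := by
    have h2 : q ≡ 1 [MOD 2] := hqmod.of_dvd ⟨2 ^ (k - 1) * p, by
      rw [← mul_assoc, ← pow_succ']
      congr 1; congr 1; omega⟩
    rw [Nat.odd_iff]; simpa [Nat.ModEq] using h2
  have hpq : p ≠ q := by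
    intro hpq
    have h2 : q ≡ 1 [MOD p] := hqmod.of_dvd ⟨2 ^ k, by ring⟩
    rw [← hpq] at h2
    have : p % p = 1 % p := h2
    rw [Nat.mod_self, Nat.one_mod_eq_one.mpr hp.one_lt.ne'] at this
    exact one_ne_zero this.symm
  have hqodd' : Odd q := hqodd
  have hq0 : 0 < p * q * m₁ := by positivity
  have hcop2 : Nat.Coprime (2 ^ k) (p * q * m₁) := by
    refine Nat.Coprime.pow_left _ ?_
    refine Nat.Coprime.mul_right (Nat.Coprime.mul_right ?_ ?_) h2m₁ <;>
      rw [Nat.coprime_two_left] <;> assumption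
  have h3unit : IsUnit ((3 : ℕ) : ZMod (2 ^ k)) := by
    rw [ZMod.isUnit_iff_coprime]
    refine Nat.Coprime.pow_right _ ?_
    decide
  obtain ⟨r, hrgt, hr, hr1, hr2⟩ := dirichlet_crt (2 ^ k) (p * q * m₁) (by positivity) hq0 hcop2
    ((3 : ℕ) : ZMod (2 ^ k)) 1 h3unit isUnit_one 1
  have hrmod : r ≡ 3 [MOD 2 ^ k] := (ZMod.natCast_eq_natCast_iff _ _ _).mp hr1
  have hrmod1 : r ≡ 1 [MOD p * q * m₁] :=
    (ZMod.natCast_eq_natCast_iff _ _ _).mp (by simpa using hr2)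
  have hrodd : Odd r := by
    have h2 : r ≡ 3 [MOD 2] := hrmod.of_dvd ⟨2 ^ (k - 1), by rw [← pow_succ']; congr 1; omega⟩
    rw [Nat.odd_iff]; simpa [Nat.ModEq] using h2
  have hmod1_ne : ∀ s t : ℕ, 1 < s → s ∣ t → ¬ (t ≡ 1 [MOD t]) → True := fun _ _ _ _ _ => trivial
  have key : ∀ s : ℕ, 1 < s → s ∣ p * q * m₁ → s ≠ r := by
    intro s hs hsd hsr
    have h2 : r ≡ 1 [MOD s] := hrmod1.of_dvd hsd
    rw [← hsr] at h2
    have : s % s = 1 % s := h2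
    rw [Nat.mod_self, Nat.one_mod_eq_one.mpr hs.ne'] at this
    exact one_ne_zero this.symm
  refine ⟨q, r, hq, hr, hqmod, hqzmod, hrmod, hrmod1, hqodd, hrodd, hpq, ?_, ?_⟩
  · exact key p hp.one_lt ⟨q * m₁, by ring⟩
  · exact key q hq.one_lt ⟨p * m₁, by ring⟩
end
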